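/- Assume σ = −1 + 2/n and a₁ < 0 (so that T₁ = T₀ > 0 and A ≡ 0). Then there exists ε > 0 such that whenever Y₀, Y₁ ∈ ℝⁿ satisfy |Y₀| ≤ ε and |Y₁| ≤ ε, the Cauchy problem D_t²Y(t) + λ|Y(t)|^{p−1}Y(t) = 0, Y(0) = Y₀, D_tY(0) = Y₁, has a global solution, i.e., a C¹ solution with bounded value and bounded derivative defined on the whole interval [0,T₀). -/

import Mathlib

/-!
Cut the nonlinearity off outside the unit ball, radially in both the position and the velocity.
The resulting first-order field on `E × E` is globally Lipschitz and bounded, so Picard–Lindelöf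
gives a solution on all of `[0, T]`. The field is also bounded by `K ‖x‖` with `K = max 1 |λ|`,
so by Grönwall a solution starting in the ball of radius `exp (-K T)` stays in the unit ball up to
time `T`, where the cutoff is inactive. For `σ = -1 + 2/n` and `a₁ < 0` the horizon `T₀` is finite
and positive.
-/

open Set Metric

lemma rpow_add_one_sub_rpow_add_one_le {a b q : ℝ} (ha : 0 ≤ a) (hab : a ≤ b) (hq : 0 ≤ q) :
    b ^ (q + 1) - a ^ (q + 1) ≤ (q + 1) * b ^ q * (b - a) := by
  rcases (ha.trans hab).eq_or_lt with hb | hb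
  · have ha' : a = 0 := le_antisymm (hb ▸ hab) ha
    simp [← hb, ha', Real.zero_rpow (by linarith : q + 1 ≠ 0)]
  have hratio : (-1 : ℝ) ≤ a / b - 1 := by linarith [div_nonneg ha hb.le]
  have bernoulli := one_add_mul_self_le_rpow_one_add hratio (by linarith : (1 : ℝ) ≤ q + 1)
  rw [add_sub_cancel, Real.div_rpow ha hb.le, le_div_iff₀ (by positivity)] at bernoulli
  have hbq : b ^ (q + 1) = b ^ q * b := by rw [Real.rpow_add hb, Real.rpow_one]
  rw [hbq] at bernoulli ⊢
  have : (q + 1) * (a / b - 1) * (b ^ q * b) = (q + 1) * b ^ q * (a - b) := by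
    field_simp
  nlinarith

lemma rpow_sub_rpow_mul_le {a b q : ℝ} (ha : 0 ≤ a) (hab : a ≤ b) (hq : 0 ≤ q) :
    (b ^ q - a ^ q) * b ≤ (q + 1) * b ^ q * (b - a) := by
  have htangent := rpow_add_one_sub_rpow_add_one_le ha hab hq
  rw [Real.rpow_add_one' (ha.trans hab) (by linarith), Real.rpow_add_one' ha (by linarith)]
    at htangent
  nlinarith [mul_le_mul_of_nonneg_left hab (Real.rpow_nonneg ha q)]

section Truncation

variable {E : Type*} [NormedAddCommGroup E] [NormedSpace ℝ E]

noncomputable def radialRetraction (y : E) : E := (max 1 ‖y‖)⁻¹ • y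

lemma norm_radialRetraction (y : E) : ‖radialRetraction y‖ = ‖y‖ / max 1 ‖y‖ := by
  rw [radialRetraction, norm_smul, norm_inv, Real.norm_of_nonneg (by positivity), inv_mul_eq_div]

lemma norm_radialRetraction_le_one (y : E) : ‖radialRetraction y‖ ≤ 1 := by
  rw [norm_radialRetraction, div_le_one (by positivity)]
  exact le_max_right _ _

lemma norm_radialRetraction_le (y : E) : ‖radialRetraction y‖ ≤ ‖y‖ := by
  rw [norm_radialRetraction]
  exact div_le_self (norm_nonneg y) (le_max_left _ _)

lemma radialRetraction_of_norm_le_one {y : E} (hy : ‖y‖ ≤ 1) : radialRetraction y = y := by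
  rw [radialRetraction, max_eq_left hy, inv_one, one_smul]

lemma lipschitzWith_radialRetraction : LipschitzWith 2 (radialRetraction : E → E) := by
  refine LipschitzWith.of_dist_le_mul fun y z => ?_
  rw [dist_eq_norm, dist_eq_norm]
  set my := max 1 ‖y‖
  set mz := max 1 ‖z‖
  have hmy : 1 ≤ my := le_max_left _ _
  have hmz : 1 ≤ mz := le_max_left _ _
  have hsplit : radialRetraction y - radialRetraction z = my⁻¹ • (y - z) + (my⁻¹ - mz⁻¹) • z := by
    rw [radialRetraction, radialRetraction, smul_sub, sub_smul]; abel
  have hfirst : ‖my⁻¹ • (y - z)‖ ≤ ‖y - z‖ := by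
    rw [norm_smul, norm_inv, Real.norm_of_nonneg (by positivity), inv_mul_eq_div]
    exact div_le_self (norm_nonneg _) hmy
  have hsecond : ‖(my⁻¹ - mz⁻¹) • z‖ ≤ ‖y - z‖ := by
    have hdiff : |mz - my| ≤ ‖y - z‖ := by
      rw [abs_sub_comm]
      simpa only [my, mz, max_comm (1 : ℝ)] using
        (abs_max_sub_max_le_abs ‖y‖ ‖z‖ 1).trans (abs_norm_sub_norm_le y z)
    have hz : ‖z‖ ≤ my * mz := (le_max_right _ _).trans (le_mul_of_one_le_left (by positivity) hmy)
    rw [norm_smul, Real.norm_eq_abs, inv_sub_inv (by positivity) (by positivity), abs_div,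
      abs_of_pos (by positivity : 0 < my * mz), div_mul_eq_mul_div, div_le_iff₀ (by positivity)]
    exact mul_le_mul hdiff hz (norm_nonneg _) (norm_nonneg _)
  calc ‖radialRetraction y - radialRetraction z‖
      ≤ ‖my⁻¹ • (y - z)‖ + ‖(my⁻¹ - mz⁻¹) • z‖ := hsplit ▸ norm_add_le _ _
    _ ≤ 2 * ‖y - z‖ := by linarith

lemma norm_rpow_smul_sub_le_of_norm_le {q : ℝ} (hq : 0 ≤ q) {u w : E} (hw : ‖w‖ ≤ 1)
    (huw : ‖u‖ ≤ ‖w‖) : ‖‖u‖ ^ q • u - ‖w‖ ^ q • w‖ ≤ (q + 2) * ‖u - w‖ := by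
  have hsplit : ‖u‖ ^ q • u - ‖w‖ ^ q • w = ‖u‖ ^ q • (u - w) - (‖w‖ ^ q - ‖u‖ ^ q) • w := by
    rw [smul_sub, sub_smul]; abel
  have hwq : ‖w‖ ^ q ≤ 1 := Real.rpow_le_one (norm_nonneg w) hw hq
  have huq : ‖u‖ ^ q ≤ 1 := (Real.rpow_le_rpow (norm_nonneg u) huw hq).trans hwq
  have hfirst : ‖‖u‖ ^ q • (u - w)‖ ≤ ‖u - w‖ := by
    rw [norm_smul, Real.norm_of_nonneg (by positivity)]
    exact mul_le_of_le_one_left (norm_nonneg _) huq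
  have hsecond : ‖(‖w‖ ^ q - ‖u‖ ^ q) • w‖ ≤ (q + 1) * ‖u - w‖ := by
    rw [norm_smul, Real.norm_of_nonneg (sub_nonneg.mpr (Real.rpow_le_rpow (norm_nonneg u) huw hq))]
    calc (‖w‖ ^ q - ‖u‖ ^ q) * ‖w‖ ≤ (q + 1) * ‖w‖ ^ q * (‖w‖ - ‖u‖) :=
          rpow_sub_rpow_mul_le (norm_nonneg u) huw hq
      _ ≤ (q + 1) * 1 * ‖u - w‖ := by
          gcongr
          rw [norm_sub_rev]
          exact norm_sub_norm_le w u
      _ = (q + 1) * ‖u - w‖ := by ring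
  calc ‖‖u‖ ^ q • u - ‖w‖ ^ q • w‖ ≤ ‖‖u‖ ^ q • (u - w)‖ + ‖(‖w‖ ^ q - ‖u‖ ^ q) • w‖ :=
        hsplit ▸ norm_sub_le _ _
    _ ≤ (q + 2) * ‖u - w‖ := by linarith

lemma lipschitzOnWith_rpow_smul {q : ℝ} (hq : 0 ≤ q) :
    LipschitzOnWith (q + 2).toNNReal (fun u : E => ‖u‖ ^ q • u) (closedBall 0 1) := by
  refine LipschitzOnWith.of_dist_le_mul fun u hu w hw => ?_
  rw [mem_closedBall_zero_iff] at hu hw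
  rw [dist_eq_norm, dist_eq_norm, Real.coe_toNNReal _ (by linarith)]
  rcases le_total ‖u‖ ‖w‖ with huw | hwu
  · exact norm_rpow_smul_sub_le_of_norm_le hq hw huw
  · rw [norm_sub_rev, norm_sub_rev u]
    exact norm_rpow_smul_sub_le_of_norm_le hq hu hwu

noncomputable def powerNonlinearity (lam q : ℝ) (u : E) : E := -((lam * ‖u‖ ^ q) • u)

lemma norm_powerNonlinearity_le {lam q : ℝ} (hq : 0 ≤ q) {u : E} (hu : ‖u‖ ≤ 1) :
    ‖powerNonlinearity lam q u‖ ≤ |lam| * ‖u‖ := by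
  rw [powerNonlinearity, norm_neg, norm_smul, norm_mul, Real.norm_eq_abs,
    Real.norm_of_nonneg (by positivity), mul_assoc]
  gcongr
  exact mul_le_of_le_one_left (norm_nonneg u) (Real.rpow_le_one (norm_nonneg u) hu hq)

lemma lipschitzOnWith_powerNonlinearity (lam : ℝ) {q : ℝ} (hq : 0 ≤ q) :
    LipschitzOnWith (‖lam‖₊ * (q + 2).toNNReal) (powerNonlinearity lam q : E → E)
      (closedBall 0 1) := by
  have hcomp : powerNonlinearity lam q = ((-lam) • ·) ∘ fun u : E => ‖u‖ ^ q • u := by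
    funext u
    simp [powerNonlinearity, mul_smul]
  rw [hcomp, ← nnnorm_neg lam]
  exact (lipschitzWith_smul _).comp_lipschitzOnWith (lipschitzOnWith_rpow_smul hq)

noncomputable def truncatedField (lam q : ℝ) (x : E × E) : E × E :=
  (radialRetraction x.2, powerNonlinearity lam q (radialRetraction x.1))

lemma exists_lipschitzWith_truncatedField (lam : ℝ) {q : ℝ} (hq : 0 ≤ q) :
    ∃ K, LipschitzWith K (truncatedField lam q : E × E → E × E) := by
  have hvelocity :=
    lipschitzWith_radialRetraction.comp (LipschitzWith.prod_snd (α := E) (β := E))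
  have hposition :=
    lipschitzWith_radialRetraction.comp (LipschitzWith.prod_fst (α := E) (β := E))
  have hforce := lipschitzOnWith_univ.mp <|
    (lipschitzOnWith_powerNonlinearity lam hq).comp hposition.lipschitzOnWith
      fun x _ => mem_closedBall_zero_iff.mpr (norm_radialRetraction_le_one x.1)
  exact ⟨_, hvelocity.prodMk hforce⟩

lemma norm_truncatedField_le {lam q : ℝ} (hq : 0 ≤ q) (x : E × E) :
    ‖truncatedField lam q x‖ ≤ max 1 |lam| * min 1 ‖x‖ := by
  have hretract (y : E) (hy : ‖y‖ ≤ ‖x‖) : ‖radialRetraction y‖ ≤ min 1 ‖x‖ :=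
    le_min (norm_radialRetraction_le_one y) ((norm_radialRetraction_le y).trans hy)
  refine max_le ?_ ?_
  · exact (hretract x.2 (norm_snd_le x)).trans
      (le_mul_of_one_le_left (by positivity) (le_max_left _ _))
  · calc ‖powerNonlinearity lam q (radialRetraction x.1)‖ ≤ |lam| * ‖radialRetraction x.1‖ :=
          norm_powerNonlinearity_le hq (norm_radialRetraction_le_one x.1)
      _ ≤ max 1 |lam| * min 1 ‖x‖ := by
          gcongr
          · exact le_max_right _ _
          · exact hretract x.1 (norm_fst_le x)

lemma truncatedField_of_norm_le_one (lam q : ℝ) {x : E × E} (hx : ‖x‖ ≤ 1) :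
    truncatedField lam q x = (x.2, powerNonlinearity lam q x.1) := by
  rw [truncatedField, radialRetraction_of_norm_le_one ((norm_fst_le x).trans hx),
    radialRetraction_of_norm_le_one ((norm_snd_le x).trans hx)]

end Truncation

section ODE

variable {E : Type*} [NormedAddCommGroup E] [NormedSpace ℝ E]

theorem exists_forall_mem_Icc_hasDerivWithinAt_of_lipschitzWith [CompleteSpace E] {f : E → E}
    {K L : NNReal} (hf : LipschitzWith K f) (hL : ∀ x, ‖f x‖ ≤ L) {T : ℝ} (hT : 0 ≤ T) (x₀ : E) :
    ∃ α : ℝ → E, α 0 = x₀ ∧ ∀ t ∈ Icc 0 T, HasDerivWithinAt α (f (α t)) (Icc 0 T) t := by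
  have hPL : IsPicardLindelof (fun _ => f) (tmin := 0) (tmax := T) ⟨0, le_rfl, hT⟩ x₀
      (L * T).toNNReal 0 L K :=
    .of_time_independent (fun x _ => hL x) hf.lipschitzOnWith <| by
      simp [max_eq_left hT, Real.coe_toNNReal _ (by positivity : (0 : ℝ) ≤ L * T)]
  exact hPL.exists_eq_forall_mem_Icc_hasDerivWithinAt₀

theorem norm_le_mul_exp_of_forall_mem_Icc_hasDerivWithinAt {f : E → E} {K : ℝ}
    (hf : ∀ x, ‖f x‖ ≤ K * ‖x‖) {α : ℝ → E} {a b : ℝ}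
    (hα : ∀ t ∈ Icc a b, HasDerivWithinAt α (f (α t)) (Icc a b) t) :
    ∀ t ∈ Icc a b, ‖α t‖ ≤ ‖α a‖ * Real.exp (K * (t - a)) := by
  have hderiv_right (t : ℝ) (ht : t ∈ Ico a b) : HasDerivWithinAt α (f (α t)) (Ici t) t :=
    (hα t (Ico_subset_Icc_self ht)).mono_of_mem_nhdsWithin <|
      mem_nhdsWithin.mpr ⟨Iio b, isOpen_Iio, ht.2, fun s hs => ⟨ht.1.trans hs.2, hs.1.le⟩⟩
  intro t ht
  rw [← gronwallBound_ε0]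
  exact norm_le_gronwallBound_of_norm_deriv_right_le (fun t ht => (hα t ht).continuousWithinAt)
    hderiv_right le_rfl (fun t _ => by rw [add_zero]; exact hf (α t)) t ht

end ODE

section SmallData

variable {E : Type*} [NormedAddCommGroup E] [NormedSpace ℝ E] [CompleteSpace E]

theorem exists_truncatedField_solution_norm_le_one (lam : ℝ) {q T : ℝ} (hq : 0 ≤ q) (hT : 0 ≤ T)
    {x₀ : E × E} (hx₀ : ‖x₀‖ ≤ Real.exp (-(max 1 |lam| * T))) :
    ∃ α : ℝ → E × E, α 0 = x₀ ∧
      (∀ t ∈ Icc 0 T, HasDerivWithinAt α (truncatedField lam q (α t)) (Icc 0 T) t) ∧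
      ∀ t ∈ Icc 0 T, ‖α t‖ ≤ 1 := by
  set K := max 1 |lam|
  have hK : 0 ≤ K := zero_le_one.trans (le_max_left _ _)
  obtain ⟨L, hL⟩ := exists_lipschitzWith_truncatedField (E := E) lam hq
  have hbounded (x : E × E) : ‖truncatedField lam q x‖ ≤ K.toNNReal := by
    rw [Real.coe_toNNReal _ hK]
    exact (norm_truncatedField_le hq x).trans (mul_le_of_le_one_right hK (min_le_left _ _))
  have hlinear (x : E × E) : ‖truncatedField lam q x‖ ≤ K * ‖x‖ :=
    (norm_truncatedField_le hq x).trans (mul_le_mul_of_nonneg_left (min_le_right _ _) hK)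
  obtain ⟨α, hα₀, hα⟩ :=
    exists_forall_mem_Icc_hasDerivWithinAt_of_lipschitzWith hL hbounded hT x₀
  refine ⟨α, hα₀, hα, fun t ht => ?_⟩
  calc ‖α t‖ ≤ ‖α 0‖ * Real.exp (K * (t - 0)) :=
        norm_le_mul_exp_of_forall_mem_Icc_hasDerivWithinAt hlinear hα t ht
    _ ≤ Real.exp (-(K * T)) * Real.exp (K * T) := by
        rw [hα₀, sub_zero]
        gcongr
        exact ht.2
    _ = 1 := by rw [← Real.exp_add, neg_add_cancel, Real.exp_zero]

theorem exists_global_solution_of_small_data (lam : ℝ) {q T : ℝ} (hq : 0 ≤ q) (hT : 0 ≤ T) :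
    ∃ ε > 0, ∀ Y₀ Y₁ : E, ‖Y₀‖ ≤ ε → ‖Y₁‖ ≤ ε →
      ∃ Y Y' : ℝ → E,
        (∀ t ∈ Icc 0 T, HasDerivWithinAt Y (Y' t) (Icc 0 T) t) ∧
        (∀ t ∈ Icc 0 T, HasDerivWithinAt Y' (powerNonlinearity lam q (Y t)) (Icc 0 T) t) ∧
        Y 0 = Y₀ ∧ Y' 0 = Y₁ ∧ ∀ t ∈ Icc 0 T, ‖Y t‖ ≤ 1 ∧ ‖Y' t‖ ≤ 1 := by
  refine ⟨_, Real.exp_pos (-(max 1 |lam| * T)), fun Y₀ Y₁ hY₀ hY₁ => ?_⟩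
  obtain ⟨α, hα₀, hα, hα_le⟩ :=
    exists_truncatedField_solution_norm_le_one lam hq hT (x₀ := (Y₀, Y₁)) (max_le hY₀ hY₁)
  have hα' (t : ℝ) (ht : t ∈ Icc 0 T) :
      HasDerivWithinAt α ((α t).2, powerNonlinearity lam q (α t).1) (Icc 0 T) t :=
    truncatedField_of_norm_le_one lam q (hα_le t ht) ▸ hα t ht
  refine ⟨fun t => (α t).1, fun t => (α t).2, fun t ht => ?_, fun t ht => ?_,
    congrArg Prod.fst hα₀, congrArg Prod.snd hα₀, fun t ht =>
      ⟨(norm_fst_le _).trans (hα_le t ht), (norm_snd_le _).trans (hα_le t ht)⟩⟩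
  · exact hasFDerivAt_fst.comp_hasDerivWithinAt t (hα' t ht)
  · exact hasFDerivAt_snd.comp_hasDerivWithinAt t (hα' t ht)

end SmallData

/-- Case (iii) with contraction: `σ = -1 + 2/n`, `a₁ < 0` (so `T₁ = T₀ > 0` and `A ≡ 0`).
Small-data global existence of a `C¹` solution of `D_t²Y + λ|Y|^{p-1}Y = 0` on `[0, T₀)`,
with bounded value and bounded derivative, where `T₀ = -2a₀/(n(1+σ)a₁)`. -/
theorem stmt_4 (n : ℕ) (hn : 1 ≤ n) (σ a₀ a₁ lam p : ℝ)
    (ha₀ : 0 < a₀) (ha₁ : a₁ < 0) (hσ : σ = -1 + 2 / (n : ℝ)) (hp : 1 < p) :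
    ∃ ε : ℝ, 0 < ε ∧
      ∀ Y₀ Y₁ : EuclideanSpace ℝ (Fin n), ‖Y₀‖ ≤ ε → ‖Y₁‖ ≤ ε →
        ∃ Y Y' : ℝ → EuclideanSpace ℝ (Fin n),
          (∀ t ∈ Ico (0 : ℝ) (-(2 * a₀) / ((n : ℝ) * (1 + σ) * a₁)),
            HasDerivWithinAt Y (Y' t) (Ico (0 : ℝ) (-(2 * a₀) / ((n : ℝ) * (1 + σ) * a₁))) t) ∧
          (∀ t ∈ Ico (0 : ℝ) (-(2 * a₀) / ((n : ℝ) * (1 + σ) * a₁)),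
            HasDerivWithinAt Y' (-((lam * ‖Y t‖ ^ (p - 1)) • Y t))
              (Ico (0 : ℝ) (-(2 * a₀) / ((n : ℝ) * (1 + σ) * a₁))) t) ∧
          ContinuousOn Y' (Ico (0 : ℝ) (-(2 * a₀) / ((n : ℝ) * (1 + σ) * a₁))) ∧
          Y 0 = Y₀ ∧ Y' 0 = Y₁ ∧
          ∃ M : ℝ, ∀ t ∈ Ico (0 : ℝ) (-(2 * a₀) / ((n : ℝ) * (1 + σ) * a₁)),
            ‖Y t‖ ≤ M ∧ ‖Y' t‖ ≤ M := by
  have hcoef : (n : ℝ) * (1 + σ) = 2 := by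
    have : (n : ℝ) ≠ 0 := Nat.cast_ne_zero.mpr (by omega)
    rw [hσ]; field_simp; ring
  have hT : 0 ≤ -(2 * a₀) / ((n : ℝ) * (1 + σ) * a₁) := by
    rw [hcoef]
    exact div_nonneg_of_nonpos (by linarith) (by linarith)
  obtain ⟨ε, hε, hsolve⟩ :=
    exists_global_solution_of_small_data (E := EuclideanSpace ℝ (Fin n)) lam
      (q := p - 1) (by linarith) hT
  refine ⟨ε, hε, fun Y₀ Y₁ hY₀ hY₁ => ?_⟩
  obtain ⟨Y, Y', hY, hY', hY₀', hY₁', hbound⟩ := hsolve Y₀ Y₁ hY₀ hY₁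
  refine ⟨Y, Y', fun t ht => (hY t (Ico_subset_Icc_self ht)).mono Ico_subset_Icc_self,
    fun t ht => (hY' t (Ico_subset_Icc_self ht)).mono Ico_subset_Icc_self,
    fun t ht => (hY' t (Ico_subset_Icc_self ht)).continuousWithinAt.mono Ico_subset_Icc_self,
    hY₀', hY₁', 1, fun t ht => hbound t (Ico_subset_Icc_self ht)⟩
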